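/- arXiv:2602.06758 — 4 statements merged into one kernel-verified Lean document; each statement's English description precedes it below -/
import Mathlib

section
/- Let v ≥ 3 be a real number and y > 0. Then J_{v+2}(y) < J_v(y) if and only if G(v,y) > 1, where J_v(y) := 2·F_v(y·√(v/(v−2))) − 1 and G(v,y) := v·∫_1^{√(v/(v−2))} ((v+y²)/(v+y²x²))^{(v+1)/2} dx. -/
open MeasureTheory Real intervalIntegral

/-- The Student t density with `v` degrees of freedom. -/
noncomputable def tDensity (v x : ℝ) : ℝ :=
  Real.Gamma ((v + 1) / 2) / (Real.sqrt (v * π) * Real.Gamma (v / 2)) *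
    (1 + x ^ 2 / v) ^ (-((v + 1) / 2))

/-- The Student t distribution function. -/
noncomputable def tCDF (v t : ℝ) : ℝ := ∫ x in Set.Iic t, tDensity v x

/-- `J v y = P(|X_v| ≤ y √(v/(v-2)))`. -/
noncomputable def J (v y : ℝ) : ℝ := 2 * tCDF v (y * Real.sqrt (v / (v - 2))) - 1

/-- The comparison function `G(v, y)`. -/
noncomputable def G (v y : ℝ) : ℝ :=
  v * ∫ x in (1 : ℝ)..Real.sqrt (v / (v - 2)),
    ((v + y ^ 2) / (v + y ^ 2 * x ^ 2)) ^ ((v + 1) / 2)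

/-!
The substitution `x = √v tan θ` turns the t density into `c_v cos^{v-1} θ` with
`c_v = Γ((v+1)/2) / (√π Γ(v/2))` (`tConst v`), so `J_v(y) = 2 c_v ∫_{-π/2}^{ψ} cos^{v-1} - 1`
where `tan ψ = y/√(v-2)`. The same substitution in `G` gives
`cos^v φ sin φ · G(v,y) = v ∫_φ^ψ cos^{v-1}` where `tan φ = y/√v`. Integrating
`(cos^v θ sin θ)' = (v+1) cos^{v+1} θ - v cos^{v-1} θ` over `[-π/2, φ]` and using
`v c_{v+2} = (v+1) c_v` then gives `v (J_v(y) - J_{v+2}(y)) = 2 c_v cos^v φ sin φ (G(v,y) - 1)`.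
-/

open Set

lemma one_add_tan_sq_rpow_neg {θ : ℝ} (hθ : 0 < cos θ) (s : ℝ) :
    (1 + tan θ ^ 2) ^ (-(s / 2)) = cos θ ^ s := by
  rw [rpow_neg (by positivity), ← inv_rpow (by positivity), inv_one_add_tan_sq hθ.ne',
    ← rpow_natCast, ← rpow_mul hθ.le]
  congr 1
  ring

lemma one_add_tan_sq_div_rpow {θ φ : ℝ} (hθ : 0 < cos θ) (hφ : 0 < cos φ) (s : ℝ) :
    ((1 + tan φ ^ 2) / (1 + tan θ ^ 2)) ^ (s / 2) = cos θ ^ s / cos φ ^ s := by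
  rw [div_rpow (by positivity) (by positivity), ← one_add_tan_sq_rpow_neg hθ,
    ← one_add_tan_sq_rpow_neg hφ, rpow_neg (by positivity), rpow_neg (by positivity),
    inv_div_inv]

lemma cos_rpow_add_two {θ : ℝ} (hθ : 0 ≤ cos θ) {s : ℝ} (hs : s + 2 ≠ 0) :
    cos θ ^ (s + 2) = cos θ ^ s * cos θ ^ 2 := by
  exact_mod_cast rpow_add_natCast' hθ (n := 2) (by exact_mod_cast hs)

lemma hasDerivAt_cos_rpow_mul_sin {w θ : ℝ} (hw : 1 ≤ w) (hθ : 0 ≤ cos θ) :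
    HasDerivAt (fun t => cos t ^ w * sin t)
      ((w + 1) * cos θ ^ (w + 1) - w * cos θ ^ (w - 1)) θ := by
  have e1 : cos θ ^ (w + 1) = cos θ ^ (w - 1) * cos θ ^ 2 := by
    rw [← cos_rpow_add_two hθ (by linarith)]; ring_nf
  have e2 : cos θ ^ (w + 1) = cos θ ^ w * cos θ := rpow_add_one' hθ (by linarith)
  refine (((hasDerivAt_rpow_const (Or.inr hw)).comp θ (hasDerivAt_cos θ)).mul
    (hasDerivAt_sin θ)).congr_deriv ?_
  simp only [Function.comp_apply]
  linear_combination -w * e1 - e2 - w * cos θ ^ (w - 1) * sin_sq_add_cos_sq θ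

lemma add_one_mul_integral_cos_rpow {w b : ℝ} (hw : 1 ≤ w)
    (hb : b ∈ Icc (-(π / 2)) (π / 2)) :
    (w + 1) * ∫ θ in -(π / 2)..b, cos θ ^ (w + 1) =
      w * (∫ θ in -(π / 2)..b, cos θ ^ (w - 1)) + cos b ^ w * sin b := by
  have hint : ∀ c s : ℝ, 0 ≤ s →
      IntervalIntegrable (fun θ => c * cos θ ^ s) volume (-(π / 2)) b :=
    fun c s hs => (continuous_const.mul
      ((continuous_rpow_const hs).comp continuous_cos)).intervalIntegrable _ _
  have hftc := integral_eq_sub_of_hasDerivAt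
    (fun θ hθ => hasDerivAt_cos_rpow_mul_sin hw (cos_nonneg_of_mem_Icc
      ((uIcc_of_le hb.1 ▸ Icc_subset_Icc_right hb.2) hθ)))
    ((hint (w + 1) (w + 1) (by linarith)).sub (hint w (w - 1) (by linarith)))
  rw [integral_sub (hint _ _ (by linarith)) (hint _ _ (by linarith)),
    intervalIntegral.integral_const_mul, intervalIntegral.integral_const_mul, cos_neg,
    cos_pi_div_two, zero_rpow (by linarith)] at hftc
  linarith

noncomputable def tConst (w : ℝ) : ℝ := Gamma ((w + 1) / 2) / (√π * Gamma (w / 2))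

lemma tConst_pos {w : ℝ} (hw : 0 < w) : 0 < tConst w := by
  unfold tConst
  have := Gamma_pos_of_pos (by linarith : 0 < (w + 1) / 2)
  have := Gamma_pos_of_pos (by linarith : 0 < w / 2)
  positivity

lemma mul_tConst_add_two {w : ℝ} (hw : 0 < w) : w * tConst (w + 2) = (w + 1) * tConst w := by
  have h1 : (w + 2 + 1) / 2 = (w + 1) / 2 + 1 := by ring
  have h2 : (w + 2) / 2 = w / 2 + 1 := by ring
  have := Gamma_pos_of_pos (by linarith : 0 < w / 2)
  rw [tConst, tConst, h1, h2, Gamma_add_one (by positivity), Gamma_add_one (by positivity)]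
  field_simp

lemma tDensity_sqrt_mul_tan {w θ : ℝ} (hw : 0 < w) (hθ : 0 < cos θ) :
    √w / cos θ ^ 2 * tDensity w (√w * tan θ) = tConst w * cos θ ^ (w - 1) := by
  have hsq : (√w * tan θ) ^ 2 / w = tan θ ^ 2 := by
    rw [mul_pow, sq_sqrt hw.le]; field_simp
  have hpow : cos θ ^ (w + 1) = cos θ ^ (w - 1) * cos θ ^ 2 := by
    rw [← cos_rpow_add_two hθ.le (by linarith)]; ring_nf
  rw [tDensity, hsq, one_add_tan_sq_rpow_neg hθ, hpow, sqrt_mul hw.le, tConst]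
  have := sqrt_pos.2 hw
  field_simp

lemma image_mul_tan_Ioc_arctan {k : ℝ} (hk : 0 < k) (t : ℝ) :
    (fun θ => k * tan θ) '' Ioc (-(π / 2)) (arctan (t / k)) = Iic t := by
  ext x
  constructor
  · rintro ⟨θ, ⟨hθ₁, hθ₂⟩, rfl⟩
    have hθ : θ < π / 2 := hθ₂.trans_lt (arctan_lt_pi_div_two _)
    have := strictMonoOn_tan.monotoneOn ⟨hθ₁, hθ⟩
      ⟨neg_pi_div_two_lt_arctan _, arctan_lt_pi_div_two _⟩ hθ₂
    rw [tan_arctan, le_div_iff₀ hk] at this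
    simp only [mem_Iic]
    linarith
  · intro hx
    refine ⟨arctan (x / k), ⟨neg_pi_div_two_lt_arctan _, ?_⟩, ?_⟩
    · exact arctan_strictMono.monotone (div_le_div_of_nonneg_right hx hk.le)
    · simp only [tan_arctan]
      field_simp

lemma tCDF_eq_integral_cos_rpow {w : ℝ} (hw : 0 < w) (t : ℝ) :
    tCDF w t = tConst w * ∫ θ in -(π / 2)..arctan (t / √w), cos θ ^ (w - 1) := by
  have hk : 0 < √w := sqrt_pos.2 hw
  have hsub : Ioc (-(π / 2)) (arctan (t / √w)) ⊆ Ioo (-(π / 2)) (π / 2) :=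
    Ioc_subset_Ioo_right (arctan_lt_pi_div_two _)
  have hcos : ∀ θ ∈ Ioc (-(π / 2)) (arctan (t / √w)), 0 < cos θ :=
    fun θ hθ => cos_pos_of_mem_Ioo (hsub hθ)
  have hinj : InjOn (fun θ => √w * tan θ) (Ioc (-(π / 2)) (arctan (t / √w))) :=
    fun a ha b hb hab => strictMonoOn_tan.injOn (hsub ha) (hsub hb) (mul_left_cancel₀ hk.ne' hab)
  rw [tCDF, ← image_mul_tan_Ioc_arctan hk t,
    integral_image_eq_integral_abs_deriv_smul measurableSet_Ioc
      (fun θ hθ => ((hasDerivAt_tan (hcos θ hθ).ne').const_mul √w).hasDerivWithinAt) hinj,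
    integral_of_le (neg_pi_div_two_lt_arctan _).le, ← MeasureTheory.integral_const_mul]
  refine setIntegral_congr_fun measurableSet_Ioc fun θ hθ => ?_
  have := hcos θ hθ
  rw [smul_eq_mul, abs_of_pos (by positivity), mul_one_div, tDensity_sqrt_mul_tan hw this]

lemma J_eq_integral_cos_rpow {w : ℝ} (hw : 2 < w) (y : ℝ) :
    J w y = 2 * tConst w * (∫ θ in -(π / 2)..arctan (y / √(w - 2)), cos θ ^ (w - 1)) - 1 := by
  have h1 := sqrt_pos.2 (by linarith : 0 < w)
  have h2 := sqrt_pos.2 (by linarith : 0 < w - 2)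
  rw [J, tCDF_eq_integral_cos_rpow (by linarith), sqrt_div (by linarith)]
  field_simp

lemma integral_comp_mul_tan {k a b : ℝ} (hab : uIcc a b ⊆ Ioo (-(π / 2)) (π / 2))
    {g : ℝ → ℝ} (hg : Continuous g) :
    ∫ θ in a..b, k / cos θ ^ 2 * g (k * tan θ) = ∫ x in k * tan a..k * tan b, g x := by
  have hcos : ∀ θ ∈ uIcc a b, cos θ ≠ 0 := fun θ hθ => (cos_pos_of_mem_Ioo (hab hθ)).ne'
  rw [← integral_comp_mul_deriv (fun θ hθ => (hasDerivAt_tan (hcos θ hθ)).const_mul k)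
    (continuousOn_const.mul (continuousOn_const.div (continuous_cos.pow 2).continuousOn
      fun θ hθ => pow_ne_zero 2 (hcos θ hθ))) hg]
  refine integral_congr fun θ _ => ?_
  simp only [Function.comp_apply]
  ring

lemma G_integrand_eq {v φ θ : ℝ} (hv : 0 < v) (hφ : φ ∈ Ioo 0 (π / 2)) (hθ : 0 < cos θ) :
    (tan φ)⁻¹ / cos θ ^ 2 *
        ((v + (√v * tan φ) ^ 2) / (v + (√v * tan φ) ^ 2 * ((tan φ)⁻¹ * tan θ) ^ 2)) ^
          ((v + 1) / 2) =
      cos θ ^ (v - 1) / (cos φ ^ v * sin φ) := by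
  have hcφ : 0 < cos φ := cos_pos_of_mem_Ioo ⟨by linarith [pi_pos, hφ.1], hφ.2⟩
  have hsφ : 0 < sin φ := sin_pos_of_pos_of_lt_pi hφ.1 (by linarith [hφ.2, pi_pos])
  have htφ : 0 < tan φ := tan_pos_of_pos_of_lt_pi_div_two hφ.1 hφ.2
  have hratio : (v + (√v * tan φ) ^ 2) / (v + (√v * tan φ) ^ 2 * ((tan φ)⁻¹ * tan θ) ^ 2) =
      (1 + tan φ ^ 2) / (1 + tan θ ^ 2) := by
    rw [mul_pow, sq_sqrt hv.le]
    field_simp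
  have hθpow : cos θ ^ (v + 1) = cos θ ^ (v - 1) * cos θ ^ 2 := by
    rw [← cos_rpow_add_two hθ.le (by linarith)]; ring_nf
  rw [hratio, one_add_tan_sq_div_rpow hθ hcφ, hθpow, rpow_add_one hcφ.ne', tan_eq_sin_div_cos]
  field_simp

lemma G_eq {v y : ℝ} (hv : 2 < v) (hy : 0 < y) :
    G v y = v * (∫ θ in arctan (y / √v)..arctan (y / √(v - 2)), cos θ ^ (v - 1)) /
      (cos (arctan (y / √v)) ^ v * sin (arctan (y / √v))) := by
  have hsv := sqrt_pos.2 (by linarith : 0 < v)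
  have hsv2 := sqrt_pos.2 (by linarith : 0 < v - 2)
  set φ := arctan (y / √v)
  set ψ := arctan (y / √(v - 2))
  have htφ : tan φ = y / √v := tan_arctan _
  have hφ : φ ∈ Ioo 0 (π / 2) := ⟨arctan_pos.2 (by positivity), arctan_lt_pi_div_two _⟩
  have hψ : ψ ∈ Ioo 0 (π / 2) := ⟨arctan_pos.2 (by positivity), arctan_lt_pi_div_two _⟩
  have hsub : uIcc φ ψ ⊆ Ioo (-(π / 2)) (π / 2) :=
    (ordConnected_Ioo.uIcc_subset hφ hψ).trans (Ioo_subset_Ioo_left (by linarith [pi_pos]))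
  have hlimits : ∀ f : ℝ → ℝ, ∫ x in (1 : ℝ)..√(v / (v - 2)), f x =
      ∫ x in (tan φ)⁻¹ * tan φ..(tan φ)⁻¹ * tan ψ, f x := by
    intro f
    rw [inv_mul_cancel₀ (by rw [htφ]; positivity), htφ, tan_arctan, sqrt_div (by linarith)]
    field_simp
  have hg : Continuous fun x => ((v + y ^ 2) / (v + y ^ 2 * x ^ 2)) ^ ((v + 1) / 2) :=
    (continuous_const.div (by fun_prop) fun x => by positivity).rpow_const
      fun x => Or.inr (by linarith)
  rw [G, hlimits, ← integral_comp_mul_tan hsub hg, mul_div_assoc, ← intervalIntegral.integral_div]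
  congr 1
  refine integral_congr fun θ hθ => ?_
  have hy' : y = √v * tan φ := by rw [htφ]; field_simp
  rw [hy']
  exact G_integrand_eq (by linarith) hφ (cos_pos_of_mem_Ioo (hsub hθ))

lemma mul_J_sub_J_add_two {v y : ℝ} (hv : 2 < v) (hy : 0 < y) :
    v * (J v y - J (v + 2) y) =
      2 * tConst v * (cos (arctan (y / √v)) ^ v * sin (arctan (y / √v))) * (G v y - 1) := by
  have hG := G_eq hv hy
  rw [J_eq_integral_cos_rpow hv, J_eq_integral_cos_rpow (by linarith : 2 < v + 2),
    add_sub_cancel_right, show v + 2 - 1 = v + 1 by ring]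
  set φ := arctan (y / √v)
  set ψ := arctan (y / √(v - 2))
  have hP : 0 < cos φ ^ v * sin φ :=
    mul_pos (rpow_pos_of_pos (cos_arctan_pos _) _) (sin_arctan_pos.2 (by positivity))
  replace hG : cos φ ^ v * sin φ * G v y = v * ∫ θ in φ..ψ, cos θ ^ (v - 1) := by
    rw [hG, mul_div_cancel₀ _ hP.ne']
  have hint : ∀ a b : ℝ, IntervalIntegrable (fun θ => cos θ ^ (v - 1)) volume a b :=
    fun a b => ((continuous_rpow_const (by linarith)).comp continuous_cos).intervalIntegrable a b
  have hstep := add_one_mul_integral_cos_rpow (by linarith : 1 ≤ v)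
    ⟨(neg_pi_div_two_lt_arctan (y / √v)).le, (arctan_lt_pi_div_two (y / √v)).le⟩
  have hsplit := integral_add_adjacent_intervals (hint (-(π / 2)) φ) (hint φ ψ)
  have hK := mul_tConst_add_two (by linarith : 0 < v)
  linear_combination -2 * (∫ θ in -(π / 2)..φ, cos θ ^ (v + 1)) * hK - 2 * tConst v * hstep
    - 2 * v * tConst v * hsplit - 2 * tConst v * hG

theorem stmt_6 (v y : ℝ) (hv : 3 ≤ v) (hy : 0 < y) :
    J (v + 2) y < J v y ↔ 1 < G v y := by
  have hv2 : 2 < v := by linarith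
  have hc : 0 < 2 * tConst v * (cos (arctan (y / √v)) ^ v * sin (arctan (y / √v))) :=
    mul_pos (mul_pos two_pos (tConst_pos (by linarith)))
      (mul_pos (rpow_pos_of_pos (cos_arctan_pos _) _)
        (sin_arctan_pos.2 (div_pos hy (sqrt_pos.2 (by linarith)))))
  rw [← sub_pos, ← sub_pos (b := 1), ← mul_pos_iff_of_pos_left (by linarith : 0 < v),
    mul_J_sub_J_add_two hv2 hy, mul_pos_iff_of_pos_left hc]
end

section
/- Let v ≥ 3 be a real number and y > 0. Then J_{v+2}(y) > J_v(y) if and only if G(v,y) < 1, where J_v(y) := 2·F_v(y·√(v/(v−2))) − 1 and G(v,y) := v·∫_1^{√(v/(v−2))} ((v+y²)/(v+y²x²))^{(v+1)/2} dx. -/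
/-!
The rescaled distribution function of `t_{v+2}` differs from that of `t_v` by an explicit
antiderivative: `F_{v+2}(√((v+2)/v) y) = F_v(y) + y f_v(y) / v`, since both sides have the same
derivative and vanish at `-∞`. Hence `J_{v+2}(y) - J_v(y) = 2 (y f_v(y) / v - ∫_y^{yσ} f_v)` with
`σ = √(v/(v-2))`, while the substitution `x ↦ y x` turns `G(v, y)` into
`v ∫_y^{yσ} f_v / (y f_v(y))`.
-/

open MeasureTheory Real intervalIntegral

open Filter Topology

theorem hasDerivAt_integral_Iic {E : Type*} [NormedAddCommGroup E] [NormedSpace ℝ E]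
    [CompleteSpace E] {f : ℝ → E} (hf : Integrable f) (hc : Continuous f) (t : ℝ) :
    HasDerivAt (fun u => ∫ x in Set.Iic u, f x) (f t) t := by
  have hsplit : (fun u => ∫ x in Set.Iic u, f x) =
      fun u => (∫ x in Set.Iic 0, f x) + ∫ x in (0 : ℝ)..u, f x :=
    funext fun u => eq_add_of_sub_eq' (integral_Iic_sub_Iic hf.integrableOn hf.integrableOn)
  rw [hsplit]
  exact (integral_hasDerivAt_right hf.intervalIntegrable
    hc.aestronglyMeasurable.stronglyMeasurableAtFilter hc.continuousAt).const_add _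

theorem eq_zero_of_hasDerivAt_zero_of_tendsto_atBot {φ : ℝ → ℝ} (hφ : ∀ x, HasDerivAt φ 0 x)
    (hlim : Tendsto φ atBot (𝓝 0)) (x : ℝ) : φ x = 0 := by
  have hconst : φ = fun _ => φ x :=
    funext fun z => is_const_of_deriv_eq_zero (fun u => (hφ u).differentiableAt)
      (fun u => (hφ u).deriv) z x
  rw [hconst] at hlim
  exact tendsto_nhds_unique tendsto_const_nhds hlim

noncomputable def tNormConst (v : ℝ) : ℝ :=
  Real.Gamma ((v + 1) / 2) / (Real.sqrt (v * π) * Real.Gamma (v / 2))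

section tDensity

variable {v : ℝ}

theorem tDensity_eq (v x : ℝ) :
    tDensity v x = tNormConst v * (1 + x ^ 2 / v) ^ (-((v + 1) / 2)) := rfl

theorem tNormConst_pos (hv : 0 < v) : 0 < tNormConst v := by
  have := Real.Gamma_pos_of_pos (show 0 < (v + 1) / 2 by positivity)
  have := Real.Gamma_pos_of_pos (show 0 < v / 2 by positivity)
  have := Real.sqrt_pos.2 (show 0 < v * π by positivity)
  unfold tNormConst
  positivity

theorem sqrt_mul_tNormConst_add_two (hv : 0 < v) :
    √((v + 2) / v) * tNormConst (v + 2) = (v + 1) / v * tNormConst v := by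
  have hsqrt : √((v + 2) * π) = √((v + 2) / v) * √(v * π) := by
    rw [← Real.sqrt_mul (by positivity)]
    field_simp
  have hΓnum : Real.Gamma ((v + 2 + 1) / 2) = (v + 1) / 2 * Real.Gamma ((v + 1) / 2) := by
    rw [show (v + 2 + 1) / 2 = (v + 1) / 2 + 1 by ring, Real.Gamma_add_one (by positivity)]
  have hΓden : Real.Gamma ((v + 2) / 2) = v / 2 * Real.Gamma (v / 2) := by
    rw [show (v + 2) / 2 = v / 2 + 1 by ring, Real.Gamma_add_one (by positivity)]
  have := (Real.Gamma_pos_of_pos (show 0 < v / 2 by positivity)).ne'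
  have := (Real.sqrt_pos.2 (show 0 < v * π by positivity)).ne'
  have := (Real.sqrt_pos.2 (show 0 < (v + 2) / v by positivity)).ne'
  unfold tNormConst
  rw [hΓnum, hΓden, hsqrt]
  field_simp

theorem tDensity_pos (hv : 0 < v) (x : ℝ) : 0 < tDensity v x :=
  mul_pos (tNormConst_pos hv) (Real.rpow_pos_of_pos (by positivity) _)

theorem continuous_tDensity (hv : 0 < v) : Continuous (tDensity v) :=
  continuous_const.mul <|
    (by fun_prop : Continuous fun x : ℝ => 1 + x ^ 2 / v).rpow_const
      fun x => Or.inl (ne_of_gt (by positivity))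

theorem integrable_tDensity (hv : 0 < v) : Integrable (tDensity v) := by
  have hbracket : Integrable fun x : ℝ => ((1 : ℝ) + ‖x‖ ^ 2) ^ (-(v + 1) / 2) :=
    integrable_rpow_neg_one_add_norm_sq (by simpa using hv)
  convert (hbracket.comp_div (Real.sqrt_pos.2 hv).ne').const_mul (tNormConst v) using 2 with x
  rw [tDensity_eq, Real.norm_eq_abs, sq_abs, div_pow, Real.sq_sqrt hv.le, neg_div]

theorem hasDerivAt_tDensity (hv : 0 < v) (y : ℝ) :
    HasDerivAt (tDensity v) (-(v + 1) * y / (v + y ^ 2) * tDensity v y) y := by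
  have hbase : 0 < 1 + y ^ 2 / v := by positivity
  have hinner : HasDerivAt (fun x : ℝ => 1 + x ^ 2 / v) (2 * y / v) y := by
    simpa using ((hasDerivAt_pow 2 y).div_const v).const_add 1
  have h := ((Real.hasDerivAt_rpow_const (p := -((v + 1) / 2)) (Or.inl hbase.ne')).comp y
    hinner).const_mul (tNormConst v)
  refine (h : HasDerivAt (tDensity v) _ y).congr_deriv ?_
  rw [tDensity_eq, Real.rpow_sub hbase, Real.rpow_one]
  field_simp

theorem sqrt_mul_tDensity_add_two (hv : 0 < v) (y : ℝ) :
    √((v + 2) / v) * tDensity (v + 2) (√((v + 2) / v) * y) =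
      (v + 1) / (v + y ^ 2) * tDensity v y := by
  have hbase : 0 < 1 + y ^ 2 / v := by positivity
  have harg : 1 + (√((v + 2) / v) * y) ^ 2 / (v + 2) = 1 + y ^ 2 / v := by
    rw [mul_pow, Real.sq_sqrt (by positivity)]
    field_simp
  rw [tDensity_eq, tDensity_eq, harg, ← mul_assoc, sqrt_mul_tNormConst_add_two hv,
    show -((v + 2 + 1) / 2) = -((v + 1) / 2) - 1 by ring, Real.rpow_sub hbase, Real.rpow_one]
  field_simp

theorem tendsto_mul_tDensity_atBot (hv : 1 ≤ v) :
    Tendsto (fun y => y * tDensity v y) atBot (𝓝 0) := by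
  have hv0 : 0 < v := by linarith
  have hbound : ∀ y, ‖y * tDensity v y‖ ≤ tNormConst v * v * |y|⁻¹ := by
    intro y
    have hbase : 1 ≤ 1 + y ^ 2 / v := by simp only [le_add_iff_nonneg_right]; positivity
    have hdecay : (1 + y ^ 2 / v) ^ (-((v + 1) / 2)) ≤ (1 + y ^ 2 / v)⁻¹ := by
      rw [← Real.rpow_neg_one]
      exact Real.rpow_le_rpow_of_exponent_le hbase (by linarith)
    rw [norm_mul, Real.norm_of_nonneg (tDensity_pos hv0 y).le, Real.norm_eq_abs, tDensity_eq]
    rcases eq_or_ne y 0 with rfl | hy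
    · simp
    have hy2 : 0 < |y| := abs_pos.2 hy
    calc |y| * (tNormConst v * (1 + y ^ 2 / v) ^ (-((v + 1) / 2)))
        ≤ |y| * (tNormConst v * (1 + y ^ 2 / v)⁻¹) := by
          gcongr
          exact (tNormConst_pos hv0).le
      _ = tNormConst v * v * |y|⁻¹ * (|y| ^ 2 / (v + |y| ^ 2)) := by
          field_simp
          rw [sq_abs]
      _ ≤ tNormConst v * v * |y|⁻¹ := by
          have := tNormConst_pos hv0
          refine mul_le_of_le_one_right (by positivity) ((div_le_one (by positivity)).2 ?_)
          linarith
  have hdecay : Tendsto (fun y : ℝ => tNormConst v * v * |y|⁻¹) atBot (𝓝 0) := by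
    simpa using (tendsto_inv_atTop_zero.comp tendsto_abs_atBot_atTop).const_mul (tNormConst v * v)
  exact squeeze_zero_norm hbound hdecay

theorem hasDerivAt_tCDF (hv : 0 < v) (t : ℝ) : HasDerivAt (tCDF v) (tDensity v t) t :=
  hasDerivAt_integral_Iic (integrable_tDensity hv) (continuous_tDensity hv) t

theorem tCDF_add_two_sqrt_mul (hv : 1 ≤ v) (y : ℝ) :
    tCDF (v + 2) (√((v + 2) / v) * y) = tCDF v y + y * tDensity v y / v := by
  have hv0 : 0 < v := by linarith
  set s := √((v + 2) / v)
  let φ : ℝ → ℝ := fun y => tCDF (v + 2) (s * y) - tCDF v y - y * tDensity v y / v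
  have hderiv : ∀ y, HasDerivAt φ 0 y := by
    intro y
    have hrescaled := (hasDerivAt_tCDF (v := v + 2) (by linarith) (s * y)).comp y
      ((hasDerivAt_id y).const_mul s)
    have hcorr := ((hasDerivAt_id y).mul (hasDerivAt_tDensity hv0 y)).div_const v
    refine ((hrescaled.sub (hasDerivAt_tCDF hv0 y)).sub hcorr).congr_deriv ?_
    simp only [id, mul_one, one_mul]
    rw [mul_comm _ s, sqrt_mul_tDensity_add_two hv0]
    have := tDensity_pos hv0 y
    field_simp
    ring
  have hlim : Tendsto φ atBot (𝓝 0) := by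
    have hs : 0 < s := Real.sqrt_pos.2 (by positivity)
    have hrescaled := tendsto_integral_Iic_zero (f := tDensity (v + 2)) (μ := volume)
      (tendsto_id.const_mul_atBot hs)
    have hcdf := tendsto_integral_Iic_zero (f := tDensity v) (μ := volume) tendsto_id
    simpa [φ, tCDF] using
      (hrescaled.sub hcdf).sub ((tendsto_mul_tDensity_atBot hv).div_const v)
  linarith [eq_zero_of_hasDerivAt_zero_of_tendsto_atBot hderiv hlim y]

theorem rpow_ratio_eq_tDensity_div (hv : 0 < v) (y x : ℝ) :
    ((v + y ^ 2) / (v + y ^ 2 * x ^ 2)) ^ ((v + 1) / 2) = tDensity v (y * x) / tDensity v y := by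
  rw [tDensity_eq, tDensity_eq, mul_div_mul_left _ _ (tNormConst_pos hv).ne',
    Real.rpow_neg (by positivity), Real.rpow_neg (by positivity), inv_div_inv,
    ← Real.div_rpow (by positivity) (by positivity)]
  congr 1
  field_simp

theorem integral_rpow_ratio (hv : 0 < v) {y : ℝ} (hy : y ≠ 0) (σ : ℝ) :
    ∫ x in (1 : ℝ)..σ, ((v + y ^ 2) / (v + y ^ 2 * x ^ 2)) ^ ((v + 1) / 2) =
      (tCDF v (y * σ) - tCDF v y) / (y * tDensity v y) := by
  simp_rw [rpow_ratio_eq_tDensity_div hv, intervalIntegral.integral_div,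
    intervalIntegral.integral_comp_mul_left (tDensity v) hy, mul_one,
    ← integral_Iic_sub_Iic (integrable_tDensity hv).integrableOn
      (integrable_tDensity hv).integrableOn, tCDF, smul_eq_mul]
  field_simp

end tDensity

theorem stmt_7 (v y : ℝ) (hv : 3 ≤ v) (hy : 0 < y) :
    J v y < J (v + 2) y ↔ G v y < 1 := by
  have hv0 : 0 < v := by linarith
  have hJ : J (v + 2) y = 2 * (tCDF v y + y * tDensity v y / v) - 1 := by
    rw [J, add_sub_cancel_right, mul_comm y, tCDF_add_two_sqrt_mul (by linarith)]
  have hG : G v y = v * (tCDF v (y * √(v / (v - 2))) - tCDF v y) / (y * tDensity v y) := by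
    rw [G, integral_rpow_ratio hv0 hy.ne', mul_div_assoc]
  have := tDensity_pos hv0 y
  rw [hJ, hG, J, div_lt_one (by positivity), ← lt_div_iff₀' hv0, mul_div_assoc]
  constructor <;> intro h <;> linarith
end

section
/- Let y > 1 be a real number, set a = y² and C₁ = 2y⁶ + (3/4)y⁴, and let V₁ = max{100, 8y²}. Then for every real v ≥ V₁ and every x with 1 ≤ x ≤ √(v/(v−2)), one has | ((v+1)/2)·ln((v+a)/(v+a·x²)) − (a/2)(1−x²) − (1/v)·((a²/4)(x⁴−1) − (a/2)(x²−1)) | < C₁/v². -/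
/-!
Put `t = x² - 1` and `s = a t / (v + a)`, so that `ln ((v + a) / (v + a x²)) = -ln (1 + s)` and
`0 ≤ s ≤ t ≤ 2 / (v - 2) ≤ 1/2`. Replacing `ln (1 + s)` by `s - s²/2` costs at most `2 s³`,
and what remains of the expression is an explicit rational function of `a, v, t` whose
terms linear and quadratic in `t` are `O(a³ t / v²)`: the orders `1` and `1/v` cancel because
`E₀ + E₁ / v` is exactly the expansion of the main term to order `1/v`. Altogether the error is
at most `a³ / v² < C₁ / v²`.
-/
open Real

theorem abs_log_one_add_sub_le {s : ℝ} (hs0 : 0 ≤ s) (hs : s ≤ 1 / 2) :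
    |log (1 + s) - (s - s ^ 2 / 2)| ≤ 2 * s ^ 3 := by
  have h := abs_log_sub_add_sum_range_le (x := -s) (by rw [abs_neg, abs_of_nonneg hs0]; linarith) 2
  rw [abs_neg, abs_of_nonneg hs0, sub_neg_eq_add] at h
  norm_num [Finset.sum_range_succ] at h
  calc |log (1 + s) - (s - s ^ 2 / 2)|
      = |-s + s ^ 2 / 2 + log (1 + s)| := by congr 1; ring
    _ ≤ s ^ 3 / (1 - s) := h
    _ ≤ 2 * s ^ 3 := by
        rw [div_le_iff₀ (by linarith)]; nlinarith [pow_nonneg hs0 3]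

theorem sq_sub_one_le_of_le_sqrt {v x : ℝ} (hv : 2 < v) (hx : 0 ≤ x)
    (hxv : x ≤ √(v / (v - 2))) : x ^ 2 - 1 ≤ 2 / (v - 2) := by
  have hv2 : v - 2 ≠ 0 := by linarith
  have hx2 := (le_sqrt hx (div_nonneg (by linarith) (by linarith))).mp hxv
  calc x ^ 2 - 1 ≤ v / (v - 2) - 1 := by linarith
    _ = 2 / (v - 2) := by field_simp; ring

namespace StudentLogRatio

variable {a v t : ℝ}

theorem expansion_eq_sub_remainders (L : ℝ) (hv : v ≠ 0) (hva : v + a ≠ 0) :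
    (v + 1) / 2 * -L + a / 2 * t - 1 / v * (a ^ 2 / 4 * (t ^ 2 + 2 * t) - a / 2 * t)
      = -(a ^ 2 * (a - 1) * t / (2 * v * (v + a))
          + a ^ 2 * (v * (2 * a - 1) + a ^ 2) * t ^ 2 / (4 * v * (v + a) ^ 2))
        - (v + 1) / 2 * (L - (a * t / (v + a) - (a * t / (v + a)) ^ 2 / 2)) := by
  field_simp
  ring

variable (ha : 1 ≤ a) (hv : 1 ≤ v)
include ha hv

theorem linear_remainder_le (ht : 0 ≤ t) :
    a ^ 2 * (a - 1) * t / (2 * v * (v + a)) ≤ a ^ 3 * t / (2 * v ^ 2) := by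
  apply div_le_div₀ (by positivity) _ (by positivity) (by nlinarith)
  have : a ^ 2 * (a - 1) ≤ a ^ 3 := by nlinarith
  exact mul_le_mul_of_nonneg_right this ht

theorem quadratic_remainder_le :
    a ^ 2 * (v * (2 * a - 1) + a ^ 2) * t ^ 2 / (4 * v * (v + a) ^ 2)
      ≤ a ^ 3 * t ^ 2 / (2 * v ^ 2) := by
  rw [div_le_div_iff₀ (by positivity) (by positivity)]
  have h : (v * (2 * a - 1) + a ^ 2) * v ≤ 2 * a * (v + a) ^ 2 := by nlinarith
  have := mul_le_mul_of_nonneg_left h (by positivity : 0 ≤ 2 * a ^ 2 * t ^ 2 * v)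
  nlinarith

theorem cubic_remainder_le (ht : 0 ≤ t) :
    (v + 1) * (a * t / (v + a)) ^ 3 ≤ 2 * a ^ 3 * t ^ 3 / v ^ 2 := by
  have hs : a * t / (v + a) ≤ a * t / v :=
    div_le_div_of_nonneg_left (by positivity) (by positivity) (by linarith)
  calc (v + 1) * (a * t / (v + a)) ^ 3 ≤ (2 * v) * (a * t / v) ^ 3 := by gcongr; linarith
    _ = 2 * a ^ 3 * t ^ 3 / v ^ 2 := by field_simp

theorem abs_expansion_error_le (ht : 0 ≤ t) (ht2 : t ≤ 1 / 2) :
    |(v + 1) / 2 * -log (1 + a * t / (v + a)) + a / 2 * t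
        - 1 / v * (a ^ 2 / 4 * (t ^ 2 + 2 * t) - a / 2 * t)| ≤ a ^ 3 / v ^ 2 := by
  rw [expansion_eq_sub_remainders _ (by positivity) (by positivity)]
  set s := a * t / (v + a)
  have hs0 : 0 ≤ s := by positivity
  have hst : s ≤ t := div_le_of_le_mul₀ (by positivity) ht (by nlinarith)
  have hlin : 0 ≤ a ^ 2 * (a - 1) * t / (2 * v * (v + a)) := by
    have : 0 ≤ a - 1 := by linarith
    positivity
  have hquad : 0 ≤ a ^ 2 * (v * (2 * a - 1) + a ^ 2) * t ^ 2 / (4 * v * (v + a) ^ 2) := by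
    have : 0 ≤ v * (2 * a - 1) + a ^ 2 := by nlinarith
    positivity
  have hcub : |(v + 1) / 2 * (log (1 + s) - (s - s ^ 2 / 2))| ≤ 2 * a ^ 3 * t ^ 3 / v ^ 2 := by
    rw [abs_mul, abs_of_pos (by positivity)]
    calc (v + 1) / 2 * |log (1 + s) - (s - s ^ 2 / 2)| ≤ (v + 1) / 2 * (2 * s ^ 3) := by
          gcongr; exact abs_log_one_add_sub_le hs0 (hst.trans ht2)
      _ = (v + 1) * s ^ 3 := by ring
      _ ≤ _ := cubic_remainder_le ha hv ht
  have hsum : a ^ 3 * t / (2 * v ^ 2) + a ^ 3 * t ^ 2 / (2 * v ^ 2) + 2 * a ^ 3 * t ^ 3 / v ^ 2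
      ≤ a ^ 3 / v ^ 2 := by
    have hpoly : t / 2 + t ^ 2 / 2 + 2 * t ^ 3 ≤ 1 := by nlinarith
    calc _ = a ^ 3 / v ^ 2 * (t / 2 + t ^ 2 / 2 + 2 * t ^ 3) := by ring
      _ ≤ a ^ 3 / v ^ 2 := mul_le_of_le_one_right (by positivity) hpoly
  have hlin_le := linear_remainder_le ha hv ht
  have hquad_le := quadratic_remainder_le ha hv (t := t)
  rw [abs_le] at hcub ⊢
  constructor <;> linarith

end StudentLogRatio

theorem stmt_10 (y a C₁ V₁ : ℝ) (hy : 1 < y)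
    (ha : a = y ^ 2)
    (hC₁ : C₁ = 2 * y ^ 6 + (3 / 4) * y ^ 4)
    (hV₁ : V₁ = max 100 (8 * y ^ 2)) :
    ∀ v : ℝ, V₁ ≤ v → ∀ x : ℝ, 1 ≤ x → x ≤ Real.sqrt (v / (v - 2)) →
      |((v + 1) / 2) * Real.log ((v + a) / (v + a * x ^ 2))
          - (a / 2) * (1 - x ^ 2)
          - (1 / v) * ((a ^ 2 / 4) * (x ^ 4 - 1) - (a / 2) * (x ^ 2 - 1))|
        < C₁ / v ^ 2 := by
  intro v hv x hx1 hxv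
  have ha1 : 1 ≤ a := by nlinarith
  have hv100 : 100 ≤ v := (le_max_left _ _).trans (hV₁ ▸ hv)
  have ht : x ^ 2 - 1 ≤ 1 / 2 := (sq_sub_one_le_of_le_sqrt (by linarith) (by linarith) hxv).trans
    (by rw [div_le_iff₀ (by linarith)]; linarith)
  have hlog : log ((v + a) / (v + a * x ^ 2)) = -log (1 + a * (x ^ 2 - 1) / (v + a)) := by
    have hva : v + a ≠ 0 := by positivity
    have h : 1 + a * (x ^ 2 - 1) / (v + a) = (v + a * x ^ 2) / (v + a) := by field_simp; ring
    rw [h, ← log_inv, inv_div]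
  calc _ = |(v + 1) / 2 * -log (1 + a * (x ^ 2 - 1) / (v + a)) + a / 2 * (x ^ 2 - 1)
        - 1 / v * (a ^ 2 / 4 * ((x ^ 2 - 1) ^ 2 + 2 * (x ^ 2 - 1)) - a / 2 * (x ^ 2 - 1))| := by
          rw [hlog]; ring_nf
    _ ≤ a ^ 3 / v ^ 2 :=
          StudentLogRatio.abs_expansion_error_le ha1 (by linarith) (by nlinarith) ht
    _ < C₁ / v ^ 2 := by
          gcongr
          rw [hC₁, ha]
          nlinarith [pow_pos (by linarith : 0 < y) 4]
end

section
/- Let y > 1 be a real number, set a = y², C₁ = 2y⁶ + (3/4)y⁴, C₂ = (9/4)C₁ + (25/32)y⁸ + (3/2)(C₁^{2/3}·y^{8/3} + C₁^{1/3}·y^{16/3}), V₁ = max{100, 8y²} and V₂ = max{V₁, (3/2)y⁴, √(2C₁)}. Then for every real v ≥ V₂ and every x with 1 ≤ x ≤ √(v/(v−2)), one has | ((v+a)/(v+a·x²))^{(v+1)/2} − e^{(a/2)(1−x²)}·(1 + ((a²/4)(x⁴−1) − (a/2)(x²−1))/v) | < e^{(a/2)(1−x²)}·C₂/v². -/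
/-!
Write `t = x² - 1`, so `0 ≤ t ≤ 2/(v - 2)`, and `u = a t/(v + a)`. The base of the power is
`(1 + u)⁻¹`, hence `f = exp E₀ · exp δ` with `δ = a t/2 - (v + 1)/2 · log (1 + u)`.
From `u - u² ≤ log (1 + u) ≤ u` and `t v ≤ 100/49` one gets `0 ≤ δ ≤ (21/20) a²/v²`, and likewise
`0 ≤ E₁/v ≤ (21/20) a²/v²`. So `|exp δ - 1 - E₁/v| ≤ 2δ + E₁/v ≤ (63/20) a²/v²`, which is below
`C₂/v²` because `C₂ ≥ (9/4) C₁ > (9/2) a²`.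
-/

open Real

namespace StudentTExpansion

lemma sub_sq_le_log_one_add {u : ℝ} (hu : 0 ≤ u) : u - u ^ 2 ≤ log (1 + u) := by
  refine le_trans ?_ (le_log_one_add_of_nonneg hu)
  rw [le_div_iff₀ (by linarith)]
  nlinarith [pow_nonneg hu 3]

lemma abs_exp_sub_one_add_le {δ e K : ℝ} (hδ₀ : 0 ≤ δ) (hδ₁ : δ ≤ 1) (hδK : δ ≤ K)
    (he₀ : 0 ≤ e) (heK : e ≤ K) : |exp δ - (1 + e)| ≤ 3 * K := by
  have hexp : |exp δ - 1| ≤ 2 * δ := by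
    simpa only [abs_of_nonneg hδ₀] using abs_exp_sub_one_le (x := δ) (by rwa [abs_of_nonneg hδ₀])
  calc |exp δ - (1 + e)| = |(exp δ - 1) - e| := by ring_nf
    _ ≤ |exp δ - 1| + |e| := abs_sub _ _
    _ ≤ 3 * K := by rw [abs_of_nonneg he₀]; linarith

lemma sq_sub_one_mul_le {v x : ℝ} (hv : 2 < v) (hx₀ : 0 ≤ x) (hx : x ≤ √(v / (v - 2))) :
    (x ^ 2 - 1) * (v - 2) ≤ 2 := by
  have hx2 : x ^ 2 ≤ v / (v - 2) :=
    (sq_le_sq₀ hx₀ (sqrt_nonneg _)).2 hx |>.trans_eq (sq_sqrt (by apply div_nonneg <;> linarith))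
  rw [le_div_iff₀ (by linarith)] at hx2
  linarith

lemma mul_add_mul_sq_le {v t : ℝ} (hv : 100 ≤ v) (ht : 0 ≤ t) (htv : t * (v - 2) ≤ 2) :
    t * v + (v + 1) * t ^ 2 ≤ 21 / 10 := by
  have ht49 : t ≤ 1 / 49 := by nlinarith
  have htv' : t * v ≤ 100 / 49 := by nlinarith
  nlinarith [mul_le_mul ht49 htv' (by positivity) (by norm_num)]

variable {a v t : ℝ}

/-- The exponent `δ` of `f / exp E₀`, with `t = x² - 1`. -/
noncomputable def defect (a v t : ℝ) : ℝ :=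
  a * t / 2 - (v + 1) / 2 * log (1 + a * t / (v + a))

/-- `E₁` with `t = x² - 1`. -/
noncomputable def correction (a t : ℝ) : ℝ :=
  (a ^ 2 / 4) * ((1 + t) ^ 2 - 1) - (a / 2) * ((1 + t) - 1)

lemma div_rpow_eq_exp_mul_exp_defect (ha : 0 ≤ a) (hva : 0 < v + a) (ht : 0 ≤ t) :
    ((v + a) / (v + a * (1 + t))) ^ ((v + 1) / 2)
      = exp ((a / 2) * (1 - (1 + t))) * exp (defect a v t) := by
  have hu : 0 < 1 + a * t / (v + a) := by positivity
  have hden : 0 < v + a * (1 + t) := by nlinarith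
  have hratio : (v + a) / (v + a * (1 + t)) = (1 + a * t / (v + a))⁻¹ := by
    field_simp; ring
  rw [rpow_def_of_pos (div_pos hva hden), hratio, log_inv, ← exp_add, defect]
  ring_nf

lemma defect_nonneg (ha : 1 ≤ a) (hv : 0 ≤ v) (ht : 0 ≤ t) : 0 ≤ defect a v t := by
  set u := a * t / (v + a)
  have hu₀ : 0 ≤ u := by positivity
  have hu : u * (v + a) = a * t := div_mul_cancel₀ _ (by linarith)
  have hlog : log (1 + u) ≤ u := by linarith [log_le_sub_one_of_pos (by linarith : 0 < 1 + u)]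
  unfold defect
  nlinarith

lemma defect_mul_sq_le (ha : 0 ≤ a) (hv : 0 < v) (ht : 0 ≤ t) :
    defect a v t * v ^ 2 ≤ a ^ 2 * (t * v + (v + 1) * t ^ 2) / 2 := by
  set u := a * t / (v + a)
  have hu₀ : 0 ≤ u := by positivity
  have hu : u * (v + a) = a * t := div_mul_cancel₀ _ (by linarith)
  have huv : u * v ≤ a * t := by nlinarith
  have hδ : defect a v t ≤ u * (a - 1) / 2 + (v + 1) * u ^ 2 / 2 := by
    unfold defect
    nlinarith [sub_sq_le_log_one_add hu₀]
  have huv₀ : 0 ≤ u * v := by positivity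
  calc defect a v t * v ^ 2 ≤ (u * (a - 1) / 2 + (v + 1) * u ^ 2 / 2) * v ^ 2 :=
        mul_le_mul_of_nonneg_right hδ (sq_nonneg v)
    _ = (a - 1) / 2 * (u * v) * v + (v + 1) / 2 * (u * v) ^ 2 := by ring
    _ ≤ a / 2 * (a * t) * v + (v + 1) / 2 * (a * t) ^ 2 := by
        gcongr ?_ * ?_ * _ + _ * ?_ ^ 2
        · linarith
    _ = a ^ 2 * (t * v + (v + 1) * t ^ 2) / 2 := by ring

lemma correction_nonneg (ha : 1 ≤ a) (ht : 0 ≤ t) : 0 ≤ correction a t := by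
  unfold correction
  nlinarith [mul_nonneg (mul_nonneg (by linarith : 0 ≤ a) (by linarith : 0 ≤ a - 1)) ht,
    mul_nonneg (sq_nonneg a) (sq_nonneg t)]

lemma correction_mul_le (ha : 0 ≤ a) (hv : 0 ≤ v) (ht : 0 ≤ t) :
    correction a t * v ≤ a ^ 2 * (t * v + (v + 1) * t ^ 2) / 2 := by
  unfold correction
  nlinarith [mul_nonneg (mul_nonneg ha ht) hv, mul_nonneg (sq_nonneg a) (sq_nonneg t),
    mul_nonneg (mul_nonneg (sq_nonneg a) (sq_nonneg t)) hv]

lemma abs_exp_defect_sub_le (ha : 1 ≤ a) (hv : 100 ≤ v) (hva : 3 / 2 * a ^ 2 ≤ v) (ht : 0 ≤ t)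
    (htv : t * (v - 2) ≤ 2) :
    |exp (defect a v t) - (1 + correction a t / v)| ≤ 3 * (21 / 20 * a ^ 2 / v ^ 2) := by
  have hv₀ : 0 < v := by linarith
  have hB : a ^ 2 * (t * v + (v + 1) * t ^ 2) / 2 ≤ 21 / 20 * a ^ 2 := by
    nlinarith [mul_add_mul_sq_le hv ht htv, sq_nonneg a]
  have hδ : defect a v t ≤ 21 / 20 * a ^ 2 / v ^ 2 :=
    (le_div_iff₀ (by positivity)).2 ((defect_mul_sq_le (by linarith) hv₀ ht).trans hB)
  have hEv : correction a t * v ≤ 21 / 20 * a ^ 2 :=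
    (correction_mul_le (by linarith) hv₀.le ht).trans hB
  have hE : correction a t / v ≤ 21 / 20 * a ^ 2 / v ^ 2 := by
    rw [div_le_div_iff₀ hv₀ (by positivity)]
    nlinarith [mul_le_mul_of_nonneg_right hEv hv₀.le]
  have hK : 21 / 20 * a ^ 2 / v ^ 2 ≤ 1 := by
    rw [div_le_one (by positivity)]; nlinarith
  exact abs_exp_sub_one_add_le (defect_nonneg ha hv₀.le ht) (hδ.trans hK) hδ
    (div_nonneg (correction_nonneg ha ht) hv₀.le) hE

end StudentTExpansion

open StudentTExpansion in
theorem stmt_11 (y a C₁ C₂ V₁ V₂ : ℝ) (hy : 1 < y)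
    (ha : a = y ^ 2)
    (hC₁ : C₁ = 2 * y ^ 6 + (3 / 4) * y ^ 4)
    (hC₂ : C₂ = (9 / 4) * C₁ + (25 / 32) * y ^ 8
        + (3 / 2) * (C₁ ^ ((2 : ℝ) / 3) * y ^ ((8 : ℝ) / 3)
          + C₁ ^ ((1 : ℝ) / 3) * y ^ ((16 : ℝ) / 3)))
    (hV₁ : V₁ = max 100 (8 * y ^ 2))
    (hV₂ : V₂ = max V₁ (max ((3 / 2) * y ^ 4) (Real.sqrt (2 * C₁)))) :
    ∀ v : ℝ, V₂ ≤ v → ∀ x : ℝ, 1 ≤ x → x ≤ Real.sqrt (v / (v - 2)) →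
      |((v + a) / (v + a * x ^ 2)) ^ ((v + 1) / 2)
          - Real.exp ((a / 2) * (1 - x ^ 2))
            * (1 + ((a ^ 2 / 4) * (x ^ 4 - 1) - (a / 2) * (x ^ 2 - 1)) / v)|
        < Real.exp ((a / 2) * (1 - x ^ 2)) * C₂ / v ^ 2 := by
  intro v hv x hx hxv
  have ha₁ : 1 ≤ a := by nlinarith
  simp only [hV₂, hV₁, max_le_iff] at hv
  obtain ⟨⟨hv₁₀₀, -⟩, hvy, -⟩ := hv
  have hva : 3 / 2 * a ^ 2 ≤ v := by rw [ha, ← pow_mul]; exact hvy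
  have hC₁a : 2 * a ^ 2 ≤ C₁ := by
    rw [hC₁, ha, ← pow_mul]
    linarith [pow_le_pow_right₀ hy.le (by norm_num : 4 ≤ 6), pow_pos (by linarith : 0 < y) 4]
  have hC₂a : 63 / 20 * a ^ 2 < C₂ := by
    have hrpow : 0 ≤ C₁ ^ ((2 : ℝ) / 3) * y ^ ((8 : ℝ) / 3)
        + C₁ ^ ((1 : ℝ) / 3) * y ^ ((16 : ℝ) / 3) := by
      rw [hC₁]; positivity
    rw [hC₂]
    nlinarith [pow_pos (by linarith : 0 < y) 8, pow_pos (by linarith : 0 < a) 2]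
  obtain ⟨t, hxt⟩ : ∃ t, x ^ 2 = 1 + t := ⟨x ^ 2 - 1, by ring⟩
  have ht₀ : 0 ≤ t := by nlinarith
  have htv : t * (v - 2) ≤ 2 := by
    simpa only [hxt, add_sub_cancel_left] using sq_sub_one_mul_le (by linarith) (by linarith) hxv
  rw [show x ^ 4 = (x ^ 2) ^ 2 by ring, hxt,
    div_rpow_eq_exp_mul_exp_defect (by linarith) (by linarith) ht₀, ← mul_sub, abs_mul,
    abs_of_pos (exp_pos _), mul_div_assoc]
  refine mul_lt_mul_of_pos_left ((abs_exp_defect_sub_le ha₁ hv₁₀₀ hva ht₀ htv).trans_lt ?_)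
    (exp_pos _)
  rw [← mul_div_assoc]
  gcongr
  linarith
end
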